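/- arXiv:1807.06491 — 5 statements merged into one kernel-verified Lean document; each statement's English description precedes it below -/
import Mathlib

section
/- Let $C\in M_k$ be a correlation matrix and $d\in\mathbb{N}$. If the map $\delta_d\otimes S_C\colon M_d\otimes M_k\to M_d\otimes M_k$ is mixed unitary, then $C$ lies in the convex hull of the set $\mathcal{F}_k(d)=\{(\operatorname{tr}_d(U_i^* U_j))_{i,j=1}^k : U_1,\dots,U_k\in\mathcal{U}(d)\}$. -/
open scoped Matrix.Norms.L2Operator ComplexOrder

namespace Paper

noncomputable section
open Matrix

def schur {k : ℕ} (C X : Matrix (Fin k) (Fin k) ℂ) : Matrix (Fin k) (Fin k) ℂ :=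
  Matrix.of fun i j => C i j * X i j

def deltaTensor (d k : ℕ)
    (T : Matrix (Fin k) (Fin k) ℂ → Matrix (Fin k) (Fin k) ℂ)
    (A : Matrix (Fin d × Fin k) (Fin d × Fin k) ℂ) :
    Matrix (Fin d × Fin k) (Fin d × Fin k) ℂ :=
  Matrix.of fun p q =>
    (if p.1 = q.1 then 1 else 0) *
      (T (Matrix.of fun i j => (d : ℂ)⁻¹ * ∑ a : Fin d, A (a, i) (a, j))) p.2 q.2

def MixedUnitary {n : Type} [Fintype n] [DecidableEq n]
    (Φ : Matrix n n ℂ → Matrix n n ℂ) : Prop :=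
  ∃ (M : ℕ) (p : Fin M → ℝ) (V : Fin M → Matrix n n ℂ),
    (∀ l, 0 ≤ p l) ∧ (∑ l, p l = 1) ∧ (∀ l, V l ∈ Matrix.unitaryGroup n ℂ) ∧
    ∀ X, Φ X = ∑ l, (p l : ℂ) • (V l * X * (V l)ᴴ)

def CompletelyPositive {n : Type} [Fintype n] [DecidableEq n]
    (T : Matrix n n ℂ → Matrix n n ℂ) : Prop :=
  ∀ (m : ℕ) (A : Matrix (Fin m × n) (Fin m × n) ℂ), A.PosSemidef →
    (Matrix.of fun p q : Fin m × n =>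
      (T (Matrix.of fun i j => A (p.1, i) (q.1, j))) p.2 q.2).PosSemidef

def Fset (d k : ℕ) : Set (Matrix (Fin k) (Fin k) ℂ) :=
  {C | ∃ U : Fin k → Matrix (Fin d) (Fin d) ℂ,
    (∀ i, U i ∈ Matrix.unitaryGroup (Fin d) ℂ) ∧
    C = Matrix.of fun i j => (d : ℂ)⁻¹ * ((U i)ᴴ * U j).trace}

def opNorm {n m : Type} [Fintype n] [DecidableEq n] [Fintype m] [DecidableEq m]
    (f : Matrix n n ℂ → Matrix m m ℂ) : ℝ :=
  sSup {r | ∃ X : Matrix n n ℂ, ‖X‖ ≤ 1 ∧ r = ‖f X‖}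

def distMU (d k : ℕ)
    (Φ : Matrix (Fin d × Fin k) (Fin d × Fin k) ℂ → Matrix (Fin d × Fin k) (Fin d × Fin k) ℂ) : ℝ :=
  sInf {r | ∃ Ψ, MixedUnitary Ψ ∧ r = opNorm (fun A => Φ A - Ψ A)}

/-! Write `E_ij = I_d ⊗ e_ij`. Since `δ_d ⊗ S_C` maps `E_ij` to `C_ij E_ij`, a mixed-unitary
representation `∑ p_l V_l (·) V_l*` gives `∑ p_l V_l E_ij V_l* = C_ij E_ij`. For `i = j`, the
diagonal entries of the left side outside the `i`-th block are the sums of `p_l |V_l (q, (c, i))|²`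
and vanish, so every `V_l` with `p_l > 0` is block diagonal, hence has unitary diagonal blocks
`U_{l,i}`. Taking the normalized trace of the `(i, j)` block gives
`C_ij = ∑ p_l tr_d (U_{l,i} U_{l,j}^*)`, a convex combination of points of `F_k(d)`. -/

open scoped Kronecker

section

variable {m o ι : Type*} [Fintype m] [DecidableEq m] [Fintype o] [DecidableEq o] [Fintype ι]

variable (m) in
def oneKroneckerSingle (i j : o) : Matrix (m × o) (m × o) ℂ :=
  (1 : Matrix m m ℂ) ⊗ₖ single i j 1

lemma mul_oneKroneckerSingle_mul_conjTranspose_apply (V : Matrix (m × o) (m × o) ℂ)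
    (i j : o) (q r : m × o) :
    (V * oneKroneckerSingle m i j * Vᴴ) q r = ∑ c, V q (c, i) * star (V r (c, j)) := by
  simp [oneKroneckerSingle, mul_apply, one_apply, single_apply, Fintype.sum_prod_type, ite_and]

lemma sum_mul_oneKroneckerSingle_mul_conjTranspose_apply (V : Matrix (m × o) (m × o) ℂ)
    (i j : o) :
    ∑ a, (V * oneKroneckerSingle m i j * Vᴴ) (a, i) (a, j)
      = trace (blockDiag V i * (blockDiag V j)ᴴ) := by
  simp only [mul_oneKroneckerSingle_mul_conjTranspose_apply]
  simp only [trace, diag_apply, mul_apply, blockDiag_apply, conjTranspose_apply]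

lemma apply_eq_zero_of_sum_conj_oneKroneckerSingle_apply_self_eq_zero {p : ι → ℝ}
    (hp : ∀ l, 0 ≤ p l) {V : ι → Matrix (m × o) (m × o) ℂ} {i : o} {q : m × o}
    (h : (∑ l, (p l : ℂ) • (V l * oneKroneckerSingle m i i * (V l)ᴴ)) q q = 0)
    {l : ι} (hl : p l ≠ 0) (c : m) : V l q (c, i) = 0 := by
  have hsum : ∑ l, p l * ∑ c, Complex.normSq (V l q (c, i)) = 0 := by
    apply Complex.ofReal_injective
    rw [Complex.ofReal_zero, ← h]
    simp [Matrix.sum_apply, mul_oneKroneckerSingle_mul_conjTranspose_apply, Complex.mul_conj]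
  have hterm := (Finset.sum_eq_zero_iff_of_nonneg fun l _ =>
    mul_nonneg (hp l) (Finset.sum_nonneg fun c _ => Complex.normSq_nonneg _)).1 hsum l
      (Finset.mem_univ _)
  have hnorm := (Finset.sum_eq_zero_iff_of_nonneg fun c _ => Complex.normSq_nonneg _).1
    ((mul_eq_zero.1 hterm).resolve_left hl) c (Finset.mem_univ _)
  exact Complex.normSq_eq_zero.1 hnorm

lemma blockDiagonal_blockDiag_of_sum_conj_oneKroneckerSingle_eq {p : ι → ℝ}
    (hp : ∀ l, 0 ≤ p l) {V : ι → Matrix (m × o) (m × o) ℂ} {c : o → ℂ}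
    (h : ∀ i, ∑ l, (p l : ℂ) • (V l * oneKroneckerSingle m i i * (V l)ᴴ)
      = c i • oneKroneckerSingle m i i)
    {l : ι} (hl : p l ≠ 0) : blockDiagonal (blockDiag (V l)) = V l := by
  ext ⟨a, i'⟩ ⟨b, i⟩
  rcases eq_or_ne i' i with rfl | hne
  · simp [blockDiag_apply]
  · rw [blockDiagonal_apply_ne _ _ _ hne]
    refine (apply_eq_zero_of_sum_conj_oneKroneckerSingle_apply_self_eq_zero hp ?_ hl b).symm
    rw [h i]
    simp [oneKroneckerSingle, hne.symm]

end

lemma mem_unitaryGroup_of_blockDiagonal_mem {m o α : Type*} [Fintype m] [DecidableEq m]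
    [Fintype o] [DecidableEq o] [CommRing α] [StarRing α] {U : o → Matrix m m α}
    (h : blockDiagonal U ∈ unitaryGroup (m × o) α) (i : o) : U i ∈ unitaryGroup m α := by
  rw [mem_unitaryGroup_iff] at h ⊢
  have hblocks : blockDiagonal (fun i => U i * star (U i)) = blockDiagonal 1 := by
    simpa [star_eq_conjTranspose] using h
  exact congr_fun (blockDiagonal_injective hblocks) i

lemma deltaTensor_one_kronecker {d k : ℕ} (hd : d ≠ 0)
    (T : Matrix (Fin k) (Fin k) ℂ → Matrix (Fin k) (Fin k) ℂ) (X : Matrix (Fin k) (Fin k) ℂ) :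
    deltaTensor d k T ((1 : Matrix (Fin d) (Fin d) ℂ) ⊗ₖ X)
      = (1 : Matrix (Fin d) (Fin d) ℂ) ⊗ₖ T X := by
  have hX : (of fun i j => (d : ℂ)⁻¹ * ∑ a : Fin d,
      ((1 : Matrix (Fin d) (Fin d) ℂ) ⊗ₖ X) (a, i) (a, j)) = X := by
    ext i j
    simp [hd]
  ext ⟨a, i⟩ ⟨b, j⟩
  rw [deltaTensor, hX]
  simp [one_apply]

lemma schur_single {k : ℕ} (C : Matrix (Fin k) (Fin k) ℂ) (i j : Fin k) (c : ℂ) :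
    schur C (single i j c) = C i j • single i j c := by
  ext i' j'
  simp only [schur, of_apply, Matrix.smul_apply, single_apply, smul_eq_mul]
  split_ifs with h
  · rw [h.1, h.2]
  · simp

def normalizedGram (d : ℕ) {k : ℕ} (U : Fin k → Matrix (Fin d) (Fin d) ℂ) :
    Matrix (Fin k) (Fin k) ℂ :=
  of fun i j => (d : ℂ)⁻¹ * ((U i)ᴴ * U j).trace

lemma eq_sum_smul_normalizedGram {ι : Type*} [Fintype ι] {d k : ℕ} (hd : d ≠ 0)
    {p : ι → ℝ} {V : ι → Matrix (Fin d × Fin k) (Fin d × Fin k) ℂ} {C : Matrix (Fin k) (Fin k) ℂ}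
    (h : ∀ i j, ∑ l, (p l : ℂ) • (V l * oneKroneckerSingle (Fin d) i j * (V l)ᴴ)
      = C i j • oneKroneckerSingle (Fin d) i j) :
    C = ∑ l, p l • normalizedGram d fun i => (blockDiag (V l) i)ᴴ := by
  ext i j
  calc C i j = (d : ℂ)⁻¹ * ∑ a, (C i j • oneKroneckerSingle (Fin d) i j) (a, i) (a, j) := by
        simp [oneKroneckerSingle, hd]
    _ = (d : ℂ)⁻¹ * ∑ l, (p l : ℂ) * trace (blockDiag (V l) i * (blockDiag (V l) j)ᴴ) := by
        rw [← h]
        simp only [Matrix.sum_apply, Matrix.smul_apply, smul_eq_mul]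
        rw [Finset.sum_comm]
        simp only [← Finset.mul_sum, sum_mul_oneKroneckerSingle_mul_conjTranspose_apply]
    _ = _ := by simp [Matrix.sum_apply, normalizedGram, Finset.mul_sum, mul_left_comm]

theorem stmt3_general (d k : ℕ) (hd : 0 < d) (C : Matrix (Fin k) (Fin k) ℂ)
    (hMU : MixedUnitary (deltaTensor d k (schur C))) :
    C ∈ convexHull ℝ (Fset d k) := by
  obtain ⟨M, p, V, hp, hp1, hV, hΦ⟩ := hMU
  have hE : ∀ i j, ∑ l, (p l : ℂ) • (V l * oneKroneckerSingle (Fin d) i j * (V l)ᴴ)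
      = C i j • oneKroneckerSingle (Fin d) i j := fun i j => by
    rw [← hΦ, oneKroneckerSingle, deltaTensor_one_kronecker hd.ne', schur_single, kronecker_smul]
  have hGram : ∀ l, p l ≠ 0 → normalizedGram d (fun i => (blockDiag (V l) i)ᴴ) ∈ Fset d k := by
    intro l hl
    have hblock := blockDiagonal_blockDiag_of_sum_conj_oneKroneckerSingle_eq hp (fun i => hE i i) hl
    refine ⟨_, fun i => ?_, rfl⟩
    rw [← star_eq_conjTranspose, Unitary.star_mem_iff]
    exact mem_unitaryGroup_of_blockDiagonal_mem (hblock.symm ▸ hV l) i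
  rw [eq_sum_smul_normalizedGram hd.ne' hE, ← finsum_eq_sum_of_fintype]
  exact (convex_convexHull ℝ _).finsum_mem hp (by rwa [finsum_eq_sum_of_fintype])
    fun l hl => subset_convexHull ℝ _ (hGram l hl)

/-- If `C` is a correlation matrix and `δ_d ⊗ S_C` is mixed unitary,
then `C ∈ conv(F_k(d))`. -/
theorem stmt3 (d k : ℕ) (hd : 0 < d) (C : Matrix (Fin k) (Fin k) ℂ)
    (hC : C.PosSemidef) (hdiag : ∀ i, C i i = 1)
    (hMU : MixedUnitary (deltaTensor d k (schur C))) :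
    C ∈ convexHull ℝ (Fset d k) :=
  stmt3_general d k hd C hMU

end
end Paper
end

section
/- Let $d,k\in\mathbb{N}$ and let $C=(\operatorname{tr}_d(U_i U_j^*))_{i,j=1}^k$ for unitaries $U_1,\dots,U_k\in\mathcal{U}(d)$. Then $\delta_d\otimes S_C$ is a mixed unitary map on $M_d\otimes M_k$. Explicitly, letting $\{W_l\}_{l=1}^{d^2}$ enumerate the Weyl-Heisenberg unitaries in $\mathcal{U}(d)$ and setting $\widetilde{W}_{l,l'}=\bigoplus_{i=1}^k W_{l'}U_i W_l\in\mathcal{U}(dk)$, one has $(\delta_d\otimes S_C)(A)=d^{-4}\sum_{l,l'=1}^{d^2}\widetilde{W}_{l,l'} A \widetilde{W}_{l,l'}^*$ for all $A\in M_d\otimes M_k$. -/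
/-!
Conjugating by the clock powers `D ^ t` and averaging over `t` kills the off-diagonal entries
(the roots of unity `ω ^ ((a - b) t)` average to zero); averaging the remaining diagonal over the
shifts `S ^ s` spreads its trace uniformly, so `∑ₗ Wₗ X Wₗ* = d tr(X) I`. Applied twice inside the
`(i, j)` block, `∑_{l,l'} W_{l'} Uᵢ W_l B W_l* Uⱼ* W_{l'}* = d² tr(B) tr(Uᵢ Uⱼ*) I`, which is `d⁴`
times the `(i, j)` block of `(δ_d ⊗ S_C)(A)` when `B` is the `(i, j)` block of `A`. The `W̃_{l,l'}`
are block-diagonal unitaries, so the `d⁴` equal weights exhibit `δ_d ⊗ S_C` as mixed unitary.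
-/

open scoped Matrix.Norms.L2Operator ComplexOrder

namespace Paper

noncomputable section
open Matrix

section PermMatrix

variable {n R : Type*} [Fintype n] [DecidableEq n] [CommRing R]

lemma permMatrix_pow (σ : Equiv.Perm n) (m : ℕ) : (σ ^ m).permMatrix R = σ.permMatrix R ^ m := by
  induction m with
  | zero => simp
  | succ m ih => rw [pow_succ, permMatrix_mul, ih, pow_succ']

variable [StarRing R]

lemma permMatrix_mul_mul_conjTranspose (σ : Equiv.Perm n) (X : Matrix n n R) :
    σ.permMatrix R * X * (σ.permMatrix R)ᴴ = X.submatrix σ σ := by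
  rw [conjTranspose_permMatrix, PEquiv.toMatrix_toPEquiv_mul, PEquiv.mul_toMatrix_toPEquiv]
  rfl

lemma permMatrix_mem_unitaryGroup (σ : Equiv.Perm n) : σ.permMatrix R ∈ unitaryGroup n R := by
  rw [mem_unitaryGroup_iff', star_eq_conjTranspose, conjTranspose_permMatrix, ← permMatrix_mul,
    mul_inv_cancel, permMatrix_one]

end PermMatrix

section Shift

variable {G : Type*} [AddCommGroup G]

lemma subRight_pow (g : G) (m : ℕ) : Equiv.subRight g ^ m = Equiv.subRight (m • g) := by
  induction m with
  | zero => ext x; simp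
  | succ m ih =>
    ext x
    rw [pow_succ, Equiv.Perm.coe_mul, Function.comp_apply, ih, Equiv.subRight_apply,
      Equiv.subRight_apply, Equiv.subRight_apply, sub_sub, succ_nsmul']

variable [Fintype G] [DecidableEq G]

lemma sum_subRight_conj_diagonal (f : G → ℂ) :
    ∑ g : G, Equiv.Perm.permMatrix ℂ (Equiv.subRight g) * diagonal f *
        (Equiv.Perm.permMatrix ℂ (Equiv.subRight g))ᴴ = (∑ g, f g) • 1 := by
  simp_rw [permMatrix_mul_mul_conjTranspose, submatrix_diagonal_equiv]
  ext a b
  simp only [Matrix.sum_apply, diagonal_apply, Matrix.smul_apply, one_apply, smul_eq_mul, mul_ite,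
    mul_one, mul_zero]
  split_ifs with hab
  · exact Equiv.sum_comp (Equiv.subLeft a) f
  · simp

end Shift

lemma sum_fin_pow_eq_ite {K : Type*} [Field K] [DecidableEq K] {ξ : K} {N : ℕ} (h : ξ ^ N = 1) :
    ∑ t : Fin N, ξ ^ (t : ℕ) = if ξ = 1 then (N : K) else 0 := by
  split_ifs with hξ
  · simp [hξ]
  · rw [Fin.sum_univ_eq_sum_range (fun t => ξ ^ t), geom_sum_eq hξ, h, sub_self, zero_div]

section Clock

variable {n : Type*} [Fintype n] [DecidableEq n]

lemma diagonal_mem_unitaryGroup {ζ : n → ℂ} (hζ : ∀ a, ‖ζ a‖ = 1) :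
    diagonal ζ ∈ unitaryGroup n ℂ := by
  rw [mem_unitaryGroup_iff', star_eq_conjTranspose, diagonal_conjTranspose, diagonal_mul_diagonal,
    ← diagonal_one]
  congr 1
  funext a
  simp [Complex.conj_mul', hζ a]

lemma sum_diagonal_pow_conj {N : ℕ} [NeZero N] {ζ : n → ℂ} (hζ : ∀ a, ζ a ^ N = 1)
    (hinj : Function.Injective ζ) (X : Matrix n n ℂ) :
    ∑ t : Fin N, diagonal ζ ^ (t : ℕ) * X * (diagonal ζ ^ (t : ℕ))ᴴ
      = (N : ℂ) • diagonal X.diag := by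
  have hnorm : ∀ a, ‖ζ a‖ = 1 := fun a => Complex.norm_eq_one_of_pow_eq_one (hζ a) (NeZero.ne N)
  have hroot : ∀ a b, (ζ a * star (ζ b)) ^ N = 1 := fun a b => by
    rw [mul_pow, ← star_pow, hζ, hζ, star_one, mul_one]
  have hone : ∀ a b, ζ a * star (ζ b) = 1 ↔ a = b := fun a b => by
    refine ⟨fun h => hinj ?_, fun h => ?_⟩
    · have hb : star (ζ b) * ζ b = 1 := by simp [Complex.conj_mul', hnorm b]
      calc ζ a = ζ a * (star (ζ b) * ζ b) := by rw [hb, mul_one]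
        _ = ζ b := by rw [← mul_assoc, h, one_mul]
    · subst h; simp [Complex.mul_conj', hnorm a]
  ext a b
  simp only [Matrix.sum_apply, diagonal_pow, diagonal_conjTranspose, diagonal_mul, mul_diagonal,
    Matrix.smul_apply, diagonal_apply, diag_apply, Pi.pow_apply, Pi.star_apply, star_pow]
  have hterm : ∀ t : ℕ, ζ a ^ t * X a b * star (ζ b) ^ t = X a b * (ζ a * star (ζ b)) ^ t :=
    fun t => by ring
  simp_rw [hterm, ← Finset.mul_sum, sum_fin_pow_eq_ite (hroot a b), hone]
  split_ifs with hab <;> simp [hab, mul_comm]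

end Clock

lemma _root_.IsPrimitiveRoot.pow_succ_pow_eq_one {M : Type*} [CommMonoid M] {ω : M} {d : ℕ}
    (hω : IsPrimitiveRoot ω d) (j : ℕ) :
    (ω ^ (j + 1)) ^ d = 1 := by
  rw [← pow_mul, mul_comm, pow_mul, hω.pow_eq_one, one_pow]

lemma _root_.IsPrimitiveRoot.injective_pow_succ {K : Type*} [Field K] {ω : K} {d : ℕ} [NeZero d]
    (hω : IsPrimitiveRoot ω d) :
    Function.Injective fun j : Fin d => ω ^ ((j : ℕ) + 1) := fun a b h => Fin.ext <|
  hω.pow_inj a.isLt b.isLt <| mul_right_cancel₀ (hω.ne_zero (NeZero.ne d)) <| by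
    simpa only [pow_succ] using h

section Weyl

variable {d : ℕ} [NeZero d]

def shiftMatrix (d : ℕ) [NeZero d] : Matrix (Fin d) (Fin d) ℂ :=
  Equiv.Perm.permMatrix ℂ (Equiv.subRight 1)

lemma of_eq_shiftMatrix :
    (of fun i j : Fin d => if (i : ℕ) = ((j : ℕ) + 1) % d then (1 : ℂ) else 0) = shiftMatrix d := by
  ext i j
  have h : (i : ℕ) = ((j : ℕ) + 1) % d ↔ i - 1 = j := by
    rw [sub_eq_iff_eq_add, Fin.ext_iff, Fin.val_add, Fin.val_one', Nat.add_mod_mod]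
  simp [shiftMatrix, PEquiv.toMatrix_apply, h]

open Fin.CommRing in
lemma shiftMatrix_pow_val (s : Fin d) :
    shiftMatrix d ^ (s : ℕ) = Equiv.Perm.permMatrix ℂ (Equiv.subRight s) := by
  rw [shiftMatrix, ← permMatrix_pow, subRight_pow, nsmul_one, Fin.cast_val_eq_self]

lemma shiftMatrix_mem_unitaryGroup : shiftMatrix d ∈ unitaryGroup (Fin d) ℂ :=
  permMatrix_mem_unitaryGroup _

lemma sum_shiftMatrix_pow_mul_diagonal_pow_conj {ζ : Fin d → ℂ} (hζ : ∀ a, ζ a ^ d = 1)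
    (hinj : Function.Injective ζ) (X : Matrix (Fin d) (Fin d) ℂ) :
    ∑ l : Fin d × Fin d, (shiftMatrix d ^ (l.1 : ℕ) * diagonal ζ ^ (l.2 : ℕ)) * X *
        (shiftMatrix d ^ (l.1 : ℕ) * diagonal ζ ^ (l.2 : ℕ))ᴴ = ((d : ℂ) * X.trace) • 1 := by
  have hsplit : ∀ s : Fin d, ∑ t : Fin d, (shiftMatrix d ^ (s : ℕ) * diagonal ζ ^ (t : ℕ)) * X *
      (shiftMatrix d ^ (s : ℕ) * diagonal ζ ^ (t : ℕ))ᴴ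
      = shiftMatrix d ^ (s : ℕ) *
          (∑ t : Fin d, diagonal ζ ^ (t : ℕ) * X * (diagonal ζ ^ (t : ℕ))ᴴ) *
          (shiftMatrix d ^ (s : ℕ))ᴴ := fun s => by
    simp only [conjTranspose_mul, Finset.mul_sum, Finset.sum_mul, Matrix.mul_assoc]
  rw [Fintype.sum_prod_type]
  simp_rw [hsplit, sum_diagonal_pow_conj hζ hinj, Matrix.mul_smul, Matrix.smul_mul,
    ← Finset.smul_sum, shiftMatrix_pow_val, sum_subRight_conj_diagonal, smul_smul, trace]

def weylMatrix (ω : ℂ) (d : ℕ) [NeZero d] (l : Fin d × Fin d) : Matrix (Fin d) (Fin d) ℂ :=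
  shiftMatrix d ^ (l.1 : ℕ) * diagonal (fun j : Fin d => ω ^ ((j : ℕ) + 1)) ^ (l.2 : ℕ)

variable {ω : ℂ}

lemma weylMatrix_mem_unitaryGroup (hω : IsPrimitiveRoot ω d) (l : Fin d × Fin d) :
    weylMatrix ω d l ∈ unitaryGroup (Fin d) ℂ :=
  mul_mem (pow_mem shiftMatrix_mem_unitaryGroup _) <|
    pow_mem (diagonal_mem_unitaryGroup fun j : Fin d =>
      Complex.norm_eq_one_of_pow_eq_one (hω.pow_succ_pow_eq_one (j : ℕ)) (NeZero.ne d)) _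

lemma sum_weylMatrix_conj (hω : IsPrimitiveRoot ω d) (X : Matrix (Fin d) (Fin d) ℂ) :
    ∑ l, weylMatrix ω d l * X * (weylMatrix ω d l)ᴴ = ((d : ℂ) * X.trace) • 1 :=
  sum_shiftMatrix_pow_mul_diagonal_pow_conj (fun j : Fin d => hω.pow_succ_pow_eq_one (j : ℕ))
    hω.injective_pow_succ X

end Weyl

section BlockDiagonal

variable {n o R : Type*} [Fintype n] [Fintype o] [DecidableEq o] [CommRing R] [StarRing R]

lemma blockDiagonal_mul_mul_conjTranspose_apply (V : o → Matrix n n R)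
    (A : Matrix (n × o) (n × o) R) (a b : n) (i j : o) :
    (blockDiagonal V * A * (blockDiagonal V)ᴴ) (a, i) (b, j)
      = (V i * (of fun c c' => A (c, i) (c', j)) * (V j)ᴴ) a b := by
  simp only [mul_apply, Fintype.sum_prod_type, blockDiagonal_apply, conjTranspose_apply,
    blockDiagonal_conjTranspose, ite_mul, zero_mul, mul_ite, mul_zero, Finset.sum_ite_eq,
    Finset.sum_ite_eq', Finset.mem_univ, if_true, of_apply]

variable [DecidableEq n]

lemma blockDiagonal_mem_unitaryGroup {V : o → Matrix n n R} (hV : ∀ i, V i ∈ unitaryGroup n R) :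
    blockDiagonal V ∈ unitaryGroup (n × o) R := by
  rw [mem_unitaryGroup_iff', star_eq_conjTranspose, blockDiagonal_conjTranspose,
    ← blockDiagonal_mul, ← blockDiagonal_one]
  congr 1
  funext i
  exact mem_unitaryGroup_iff'.mp (hV i)

end BlockDiagonal

lemma mixedUnitary_of_eq_smul_sum {ι n : Type} [Fintype ι] [Nonempty ι] [Fintype n]
    [DecidableEq n]
    (Φ : Matrix n n ℂ → Matrix n n ℂ) (V : ι → Matrix n n ℂ) (hV : ∀ x, V x ∈ unitaryGroup n ℂ)
    (hΦ : ∀ X, Φ X = (Fintype.card ι : ℂ)⁻¹ • ∑ x, V x * X * (V x)ᴴ) : MixedUnitary Φ := by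
  let e := (Fintype.equivFin ι).symm
  refine ⟨Fintype.card ι, fun _ => (Fintype.card ι : ℝ)⁻¹, fun m => V (e m), fun _ => by positivity,
    ?_, fun m => hV (e m), fun X => ?_⟩
  · simp [Finset.card_univ]
  · rw [hΦ, Finset.smul_sum, ← e.sum_comp]
    push_cast
    rfl

lemma sum_sum_conj_of_twirl {ι n R : Type*} [Fintype ι] [Fintype n] [DecidableEq n] [CommRing R]
    [StarRing R] (W : ι → Matrix n n R) (c : R)
    (hW : ∀ X, ∑ l, W l * X * (W l)ᴴ = (c * X.trace) • 1) (M N B : Matrix n n R) :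
    ∑ l, ∑ l', W l' * M * W l * B * (W l' * N * W l)ᴴ
      = (c ^ 2 * B.trace * (M * Nᴴ).trace) • 1 := by
  calc ∑ l, ∑ l', W l' * M * W l * B * (W l' * N * W l)ᴴ
      = ∑ l', W l' * (M * (∑ l, W l * B * (W l)ᴴ) * Nᴴ) * (W l')ᴴ := by
        rw [Finset.sum_comm]
        simp only [conjTranspose_mul, Finset.mul_sum, Finset.sum_mul, Matrix.mul_assoc]
    _ = ∑ l', W l' * ((c * B.trace) • (M * Nᴴ)) * (W l')ᴴ := by
        rw [hW B, Matrix.mul_smul, Matrix.mul_one, Matrix.smul_mul]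
    _ = _ := by
        rw [hW, trace_smul, smul_eq_mul]
        congr 1
        ring

lemma deltaTensor_schur_eq_sum_blockDiagonal_conj {d k : ℕ} [NeZero d] {ι : Type*} [Fintype ι]
    (W : ι → Matrix (Fin d) (Fin d) ℂ) (hW : ∀ X, ∑ l, W l * X * (W l)ᴴ = ((d : ℂ) * X.trace) • 1)
    (U : Fin k → Matrix (Fin d) (Fin d) ℂ) (A : Matrix (Fin d × Fin k) (Fin d × Fin k) ℂ) :
    deltaTensor d k (schur (of fun i j => (d : ℂ)⁻¹ * (U i * (U j)ᴴ).trace)) A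
      = ((d : ℂ) ^ 4)⁻¹ • ∑ l, ∑ l', blockDiagonal (fun i => W l' * U i * W l) * A *
          (blockDiagonal fun i => W l' * U i * W l)ᴴ := by
  ext ⟨a, i⟩ ⟨b, j⟩
  have hblock : (∑ l, ∑ l', blockDiagonal (fun i => W l' * U i * W l) * A *
        (blockDiagonal fun i => W l' * U i * W l)ᴴ) (a, i) (b, j)
      = (∑ l, ∑ l', W l' * U i * W l * (of fun c c' => A (c, i) (c', j)) *
          (W l' * U j * W l)ᴴ) a b := by
    simp only [Matrix.sum_apply, blockDiagonal_mul_mul_conjTranspose_apply]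
  have htrace : (of fun c c' => A (c, i) (c', j)).trace = ∑ c, A (c, i) (c, j) := rfl
  rw [Matrix.smul_apply, hblock, sum_sum_conj_of_twirl W d hW, htrace]
  simp only [deltaTensor, schur, of_apply, Matrix.smul_apply, one_apply, smul_eq_mul, mul_ite,
    mul_one, mul_zero, ite_mul, one_mul, zero_mul]
  split_ifs
  · field_simp
  · rfl

/-- If `C = (tr_d(Uᵢ Uⱼ*))` for unitaries `Uᵢ ∈ U(d)`, then
`δ_d ⊗ S_C` is mixed unitary, implemented explicitly by the unitaries
`W̃_{l,l'} = ⊕ᵢ W_{l'} Uᵢ W_l` built from the Weyl–Heisenberg unitaries. -/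
theorem stmt4 (d k : ℕ) (hd : 0 < d) (ω : ℂ)
    (hω : ω = Complex.exp (2 * Real.pi * Complex.I / d))
    (S D : Matrix (Fin d) (Fin d) ℂ)
    (hS : S = Matrix.of fun i j : Fin d => if (i : ℕ) = ((j : ℕ) + 1) % d then 1 else 0)
    (hD : D = Matrix.diagonal fun j : Fin d => ω ^ ((j : ℕ) + 1))
    (W : Fin d × Fin d → Matrix (Fin d) (Fin d) ℂ)
    (hW : ∀ l, W l = S ^ (l.1 : ℕ) * D ^ (l.2 : ℕ))
    (U : Fin k → Matrix (Fin d) (Fin d) ℂ)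
    (hU : ∀ i, U i ∈ Matrix.unitaryGroup (Fin d) ℂ)
    (C : Matrix (Fin k) (Fin k) ℂ)
    (hC : C = Matrix.of fun i j => (d : ℂ)⁻¹ * (U i * (U j)ᴴ).trace)
    (Wt : (Fin d × Fin d) → (Fin d × Fin d) → Matrix (Fin d × Fin k) (Fin d × Fin k) ℂ)
    (hWt : ∀ l l', Wt l l' =
      Matrix.of fun p q => (if p.2 = q.2 then (W l' * U p.2 * W l) p.1 q.1 else 0)) :
    (∀ A : Matrix (Fin d × Fin k) (Fin d × Fin k) ℂ,
      deltaTensor d k (schur C) A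
        = ((d : ℂ) ^ 4)⁻¹ • ∑ l : Fin d × Fin d, ∑ l' : Fin d × Fin d,
            Wt l l' * A * (Wt l l')ᴴ) ∧
    MixedUnitary (deltaTensor d k (schur C)) := by
  have : NeZero d := ⟨hd.ne'⟩
  have hprim : IsPrimitiveRoot ω d := hω ▸ Complex.isPrimitiveRoot_exp d hd.ne'
  have hWeyl : W = weylMatrix ω d := funext fun l => by
    rw [hW, hS, hD, of_eq_shiftMatrix, weylMatrix]
  have hWt' : ∀ l l', Wt l l' = blockDiagonal fun i => W l' * U i * W l := fun l l' => by
    rw [hWt]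
    rfl
  subst hWeyl hC
  have hmain : ∀ A : Matrix (Fin d × Fin k) (Fin d × Fin k) ℂ,
      deltaTensor d k (schur _) A = ((d : ℂ) ^ 4)⁻¹ • ∑ l, ∑ l', Wt l l' * A * (Wt l l')ᴴ :=
    fun A => by
      simp_rw [hWt']
      exact deltaTensor_schur_eq_sum_blockDiagonal_conj _ (sum_weylMatrix_conj hprim) U A
  have hWt_unitary : ∀ l l', Wt l l' ∈ unitaryGroup (Fin d × Fin k) ℂ := fun l l' =>
    hWt' l l' ▸ blockDiagonal_mem_unitaryGroup fun i =>
      mul_mem (mul_mem (weylMatrix_mem_unitaryGroup hprim l') (hU i))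
        (weylMatrix_mem_unitaryGroup hprim l)
  refine ⟨hmain, mixedUnitary_of_eq_smul_sum _ (fun x : (Fin d × Fin d) × (Fin d × Fin d) =>
    Wt x.1 x.2) (fun x => hWt_unitary x.1 x.2) fun A => ?_⟩
  rw [hmain, ← Fintype.sum_prod_type', Fintype.card_prod, Fintype.card_prod, Fintype.card_fin]
  congr 1
  push_cast
  ring

end
end Paper
end

section
/- Let $d,k\in\mathbb{N}$ and let $R\colon M_k\to M_k$ be a linear map. Then the operator norm of $\delta_d\otimes R\colon M_d\otimes M_k\to M_d\otimes M_k$ equals the operator norm of $R$. -/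
/-! `δ_d ⊗ R` is `A ↦ 1 ⊗ R (d⁻¹ tr₁ A)`. The embedding `X ↦ 1 ⊗ X` is an injective
⋆-homomorphism of C⋆-algebras, hence isometric, and the normalised partial trace `d⁻¹ tr₁` is an
average of `d` compressions, hence contractive, and a left inverse of that embedding. So both
operator norms are suprema of one and the same set of numbers. -/

open scoped Matrix.Norms.L2Operator ComplexOrder

open scoped Kronecker

namespace Matrix

variable {𝕜 R l m n o : Type*}

section L2OpNorm

variable [RCLike 𝕜] [Fintype l] [Fintype m] [Fintype n] [Fintype o]

-- `‖1‖ = ‖1‖ ^ 2`, and `‖1‖ = 0` when `n` is empty.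
lemma l2_opNorm_one_le_one [DecidableEq n] : ‖(1 : Matrix n n 𝕜)‖ ≤ 1 := by
  have h := l2_opNorm_conjTranspose_mul_self (1 : Matrix n n 𝕜)
  rw [conjTranspose_one, Matrix.one_mul] at h
  nlinarith [norm_nonneg (1 : Matrix n n 𝕜)]

lemma l2_opNorm_le_one_of_conjTranspose_mul_self_eq_one [DecidableEq n] {P : Matrix m n 𝕜}
    (hP : Pᴴ * P = 1) : ‖P‖ ≤ 1 := by
  have h := l2_opNorm_conjTranspose_mul_self P
  rw [hP] at h
  nlinarith [norm_nonneg P, l2_opNorm_one_le_one (n := n) (𝕜 := 𝕜)]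

lemma l2_opNorm_one_submatrix_le_one [DecidableEq m] [DecidableEq n] {g : n → m}
    (hg : Function.Injective g) : ‖(1 : Matrix m m 𝕜).submatrix id g‖ ≤ 1 := by
  refine l2_opNorm_le_one_of_conjTranspose_mul_self_eq_one ?_
  rw [conjTranspose_submatrix, conjTranspose_one, ← submatrix_mul _ _ _ _ _ Function.bijective_id,
    Matrix.one_mul, submatrix_one _ hg]

lemma l2_opNorm_submatrix_le [DecidableEq l] [DecidableEq m] [DecidableEq n] [DecidableEq o]
    (A : Matrix m n 𝕜) {e : l → m} {f : o → n} (he : Function.Injective e)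
    (hf : Function.Injective f) : ‖A.submatrix e f‖ ≤ ‖A‖ := by
  set P := (1 : Matrix m m 𝕜).submatrix id e
  set Q := (1 : Matrix n n 𝕜).submatrix id f
  have hA : A.submatrix e f = Pᴴ * A * Q := by
    ext i j
    simp [P, Q, mul_apply, one_apply]
  calc ‖A.submatrix e f‖ ≤ ‖P‖ * ‖A‖ * ‖Q‖ := by
        rw [hA, ← l2_opNorm_conjTranspose P]
        exact (l2_opNorm_mul _ _).trans (by gcongr; exact l2_opNorm_mul _ _)
    _ ≤ 1 * ‖A‖ * 1 := by
        gcongr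
        exacts [l2_opNorm_one_submatrix_le_one he, l2_opNorm_one_submatrix_le_one hf]
    _ = ‖A‖ := by ring

end L2OpNorm

section Kronecker

variable [Fintype m] [DecidableEq m] [Fintype n] [DecidableEq n]

variable (R m n) in
def oneKroneckerStarAlgHom [CommSemiring R] [StarRing R] :
    Matrix n n R →⋆ₐ[R] Matrix (m × n) (m × n) R where
  toFun B := (1 : Matrix m m R) ⊗ₖ B
  map_one' := one_kronecker_one
  map_mul' B C := by rw [← mul_kronecker_mul, Matrix.one_mul]
  map_zero' := kronecker_zero _
  map_add' := kronecker_add _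
  commutes' r := by
    simp only [Algebra.algebraMap_eq_smul_one, kronecker_smul, one_kronecker_one]
  map_star' B := by simp [star_eq_conjTranspose, conjTranspose_kronecker]

lemma oneKroneckerStarAlgHom_injective [CommSemiring R] [StarRing R] [Nonempty m] :
    Function.Injective (oneKroneckerStarAlgHom R m n) := by
  intro B C h
  obtain ⟨a⟩ := ‹Nonempty m›
  ext i j
  simpa [oneKroneckerStarAlgHom] using congrFun (congrFun h (a, i)) (a, j)

lemma l2_opNorm_one_kronecker [Nonempty m] (B : Matrix n n ℂ) :
    ‖(1 : Matrix m m ℂ) ⊗ₖ B‖ = ‖B‖ :=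
  NonUnitalStarAlgHom.norm_map _ oneKroneckerStarAlgHom_injective B

end Kronecker

section TraceLeft

variable [Fintype m]

def traceLeft [AddCommMonoid R] (A : Matrix (m × n) (m × n) R) : Matrix n n R :=
  of fun i j => ∑ a, A (a, i) (a, j)

lemma traceLeft_eq_sum_submatrix [AddCommMonoid R] (A : Matrix (m × n) (m × n) R) :
    traceLeft A = ∑ a, A.submatrix (Prod.mk a) (Prod.mk a) := by
  ext i j
  simp [traceLeft, sum_apply]

lemma traceLeft_one_kronecker [DecidableEq m] [Semiring R] (B : Matrix n n R) :
    traceLeft ((1 : Matrix m m R) ⊗ₖ B) = Fintype.card m • B := by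
  ext i j
  simp [traceLeft]

lemma l2_opNorm_traceLeft_le [RCLike 𝕜] [DecidableEq m] [Fintype n] [DecidableEq n]
    (A : Matrix (m × n) (m × n) 𝕜) : ‖traceLeft A‖ ≤ Fintype.card m * ‖A‖ :=
  calc ‖traceLeft A‖ ≤ ∑ a, ‖A.submatrix (Prod.mk a) (Prod.mk a)‖ := by
        rw [traceLeft_eq_sum_submatrix]; exact norm_sum_le _ _
    _ ≤ ∑ _a : m, ‖A‖ := by
        gcongr
        exact l2_opNorm_submatrix_le A (Prod.mk_right_injective _) (Prod.mk_right_injective _)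
    _ = Fintype.card m * ‖A‖ := by simp

lemma l2_opNorm_inv_card_smul_traceLeft_le [RCLike 𝕜] [DecidableEq m] [Fintype n] [DecidableEq n]
    (A : Matrix (m × n) (m × n) 𝕜) : ‖(Fintype.card m : 𝕜)⁻¹ • traceLeft A‖ ≤ ‖A‖ := by
  rcases (Fintype.card m).eq_zero_or_pos with hm | hm
  · simp [hm]
  rw [norm_smul, norm_inv, RCLike.norm_natCast, inv_mul_le_iff₀ (by exact_mod_cast hm)]
  exact l2_opNorm_traceLeft_le A

lemma inv_card_smul_traceLeft_one_kronecker [DecidableEq m] [Nonempty m] [DivisionRing R]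
    [CharZero R] (B : Matrix n n R) :
    (Fintype.card m : R)⁻¹ • traceLeft ((1 : Matrix m m R) ⊗ₖ B) = B := by
  rw [traceLeft_one_kronecker, ← Nat.cast_smul_eq_nsmul R, smul_smul,
    inv_mul_cancel₀ (Nat.cast_ne_zero.mpr Fintype.card_ne_zero), one_smul]

end TraceLeft

end Matrix

namespace Paper

open Matrix

lemma opNorm_isometry_comp_comp_retraction {n n' m m' : Type} [Fintype n] [DecidableEq n]
    [Fintype n'] [DecidableEq n'] [Fintype m] [DecidableEq m] [Fintype m'] [DecidableEq m']
    (f : Matrix n n ℂ → Matrix m m ℂ) (ι : Matrix m m ℂ → Matrix m' m' ℂ)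
    (π : Matrix n' n' ℂ → Matrix n n ℂ) (σ : Matrix n n ℂ → Matrix n' n' ℂ)
    (hι : ∀ X, ‖ι X‖ = ‖X‖) (hπ : ∀ A, ‖π A‖ ≤ ‖A‖) (hσ : ∀ X, ‖σ X‖ ≤ ‖X‖)
    (hπσ : ∀ X, π (σ X) = X) :
    opNorm (fun A => ι (f (π A))) = opNorm f := by
  unfold opNorm
  congr 1
  ext r
  constructor
  · rintro ⟨A, hA, rfl⟩
    exact ⟨π A, (hπ A).trans hA, hι _⟩
  · rintro ⟨X, hX, rfl⟩
    exact ⟨σ X, (hσ X).trans hX, by simp only [hπσ, hι]⟩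

lemma deltaTensor_eq_one_kronecker (d k : ℕ)
    (T : Matrix (Fin k) (Fin k) ℂ → Matrix (Fin k) (Fin k) ℂ) :
    deltaTensor d k T = fun A =>
      (1 : Matrix (Fin d) (Fin d) ℂ) ⊗ₖ T ((Fintype.card (Fin d) : ℂ)⁻¹ • traceLeft A) := by
  rw [Fintype.card_fin]
  rfl

/-- For a linear map `R : M_k → M_k`, the operator norm of
`δ_d ⊗ R` equals the operator norm of `R`. -/
theorem stmt7 (d k : ℕ) (hd : 0 < d)
    (R : Matrix (Fin k) (Fin k) ℂ →ₗ[ℂ] Matrix (Fin k) (Fin k) ℂ) :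
    opNorm (deltaTensor d k (⇑R)) = opNorm (⇑R) := by
  have : Nonempty (Fin d) := Fin.pos_iff_nonempty.mp hd
  rw [deltaTensor_eq_one_kronecker]
  exact opNorm_isometry_comp_comp_retraction _ _ _ _ l2_opNorm_one_kronecker
    l2_opNorm_inv_card_smul_traceLeft_le (fun X => (l2_opNorm_one_kronecker X).le)
    inv_card_smul_traceLeft_one_kronecker

end Paper
end

section
/- Let $T\colon M_k\to M_k$ be completely positive and define $\gamma(X)=\int\!\!\int D_1^* T(D_1 X D_2) D_2^*\, dD_1\, dD_2$, where both integrals run over the group of diagonal unitary matrices in $M_k$ with respect to Haar (Lebesgue) measure on $\mathbb{T}^k$. Then $\gamma=S_B$ is the Schur multiplier by the matrix $B=(b_{i,j})$ with $b_{i,j}=T(E_{i,j})_{i,j}$, $B$ is positive semidefinite, and hence $\gamma$ is completely positive. -/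
open scoped Matrix.Norms.L2Operator ComplexOrder

namespace Paper

noncomputable section
open Matrix

/-!
Expanding `D₁ X D₂` in matrix units, the `(i, j)` entry of the integrand is a sum of the terms
`X a b * T(E a b) i j` weighted by the characters `e^{i(θ₁ a - θ₁ i)} e^{i(θ₂ b - θ₂ j)}` of the
torus. Averaging over the torus kills every nontrivial character, so only `a = i`, `b = j`
survives and `γ = S_B`. The matrix `B` is the compression of the Choi matrix of `T`, which is
positive semidefinite, to the diagonal pairs `(i, i)`; and by the Schur product theorem the
Schur multiplier of a positive semidefinite matrix is completely positive.
-/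

open MeasureTheory Complex

theorem completelyPositive_schur {k : ℕ} {B : Matrix (Fin k) (Fin k) ℂ} (hB : B.PosSemidef) :
    CompletelyPositive (schur B) := by
  intro m A hA
  have hblock : (of fun p q : Fin m × Fin k => schur B (of fun i j => A (p.1, i) (q.1, j)) p.2 q.2)
      = A ⊙ B.submatrix Prod.snd Prod.snd := by
    ext p q
    simp [schur, mul_comm]
  exact hblock ▸ hA.hadamard (hB.submatrix Prod.snd)

theorem posSemidef_choi_of_completelyPositive {k : ℕ}
    {T : Matrix (Fin k) (Fin k) ℂ → Matrix (Fin k) (Fin k) ℂ} (hT : CompletelyPositive T) :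
    (of fun p q : Fin k × Fin k => T (single p.1 q.1 1) p.2 q.2).PosSemidef := by
  let v : Fin k × Fin k → ℂ := fun p => (1 : Matrix (Fin k) (Fin k) ℂ) p.1 p.2
  have hunits : ∀ a b : Fin k,
      (of fun i j => vecMulVec v (star v) (a, i) (b, j)) = single a b 1 := by
    intro a b
    ext i j
    simp only [v, of_apply, vecMulVec_apply, Pi.star_apply, one_apply, single_apply]
    split_ifs <;> simp_all
  simpa only [hunits] using hT k _ (posSemidef_vecMulVec_self_star v)

theorem posSemidef_diag_choi_of_completelyPositive {k : ℕ}
    {T : Matrix (Fin k) (Fin k) ℂ → Matrix (Fin k) (Fin k) ℂ} (hT : CompletelyPositive T) :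
    (of fun i j => T (single i j 1) i j).PosSemidef :=
  (posSemidef_choi_of_completelyPositive hT).submatrix fun i => (i, i)

theorem conjTranspose_diagonal_mul_map_mul_conjTranspose_diagonal_apply
    {n : Type*} [Fintype n] [DecidableEq n]
    (T : Matrix n n ℂ →ₗ[ℂ] Matrix n n ℂ) (u v : n → ℂ) (X : Matrix n n ℂ) (i j : n) :
    ((diagonal u)ᴴ * T (diagonal u * X * diagonal v) * (diagonal v)ᴴ) i j =
      ∑ b, (∑ a, X a b * T (single a b 1) i j * (u a * star (u i))) * (v b * star (v j)) := by
  have hsum : diagonal u * X * diagonal v = ∑ a, ∑ b, (u a * X a b * v b) • single a b 1 := by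
    conv_lhs => rw [matrix_eq_sum_single (diagonal u * X * diagonal v)]
    simp [diagonal_mul, mul_diagonal, smul_single]
  rw [hsum, diagonal_conjTranspose, diagonal_conjTranspose, mul_diagonal, diagonal_mul]
  simp only [map_sum, map_smul, Matrix.sum_apply, Matrix.smul_apply, smul_eq_mul, Pi.star_apply,
    Finset.mul_sum, Finset.sum_mul]
  rw [Finset.sum_comm]
  refine Finset.sum_congr rfl fun b _ => Finset.sum_congr rfl fun a _ => ?_
  ring

theorem setIntegral_Icc_zero_two_pi_exp_mul_I :
    ∫ t in Set.Icc (0 : ℝ) (2 * Real.pi), exp (t * I) = 0 := by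
  rw [integral_Icc_eq_integral_Ioc, ← intervalIntegral.integral_of_le Real.two_pi_pos.le]
  simp_rw [mul_comm _ I]
  rw [integral_exp_mul_complex I_ne_zero]
  push_cast
  rw [mul_comm I, exp_two_pi_mul_I]
  simp

theorem setIntegral_univ_pi_prod {ι α 𝕜 : Type*} [Fintype ι] [MeasurableSpace α] [RCLike 𝕜]
    (μ : Measure α) [SigmaFinite μ] (s : ι → Set α) (g : ι → α → 𝕜) :
    ∫ θ in Set.univ.pi s, (∏ c, g c (θ c)) ∂(Measure.pi fun _ => μ) =
      ∏ c, ∫ t in s c, g c t ∂μ := by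
  rw [Measure.restrict_pi_pi, integral_fintype_prod_eq_prod]

section Torus

variable {ι : Type*} [Fintype ι] [DecidableEq ι]

theorem setIntegral_torus_exp_mul_star_exp (a b : ι) :
    ∫ θ in Set.univ.pi fun _ : ι => Set.Icc (0 : ℝ) (2 * Real.pi),
      exp (θ a * I) * star (exp (θ b * I)) =
      if a = b then (((2 * Real.pi) ^ Fintype.card ι : ℝ) : ℂ) else 0 := by
  have hprod : ∀ θ : ι → ℝ, exp (θ a * I) * star (exp (θ b * I)) =
      ∏ c, (if c = a then exp (θ c * I) else 1) * (if c = b then star (exp (θ c * I)) else 1) := by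
    intro θ
    rw [Finset.prod_mul_distrib, Finset.prod_ite_eq' _ a, Finset.prod_ite_eq' _ b]
    simp
  simp_rw [hprod]
  rw [volume_pi, setIntegral_univ_pi_prod _ _ fun c (t : ℝ) =>
    (if c = a then exp (t * I) else 1) * (if c = b then star (exp (t * I)) else 1)]
  split_ifs with hab
  · subst hab
    have hone : ∀ (c : ι) (t : ℝ),
        (if c = a then exp (t * I) else 1) * (if c = a then star (exp (t * I)) else 1) = 1 := by
      intro c t
      split_ifs <;> simp [← exp_conj, ← exp_add]
    simp only [hone]
    simp [Real.two_pi_pos.le]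
  · refine Finset.prod_eq_zero (Finset.mem_univ a) ?_
    simpa [hab] using setIntegral_Icc_zero_two_pi_exp_mul_I

theorem setIntegral_torus_sum_mul_exp_mul_star_exp (c : ι → ℂ) (j : ι) :
    ∫ θ in Set.univ.pi fun _ : ι => Set.Icc (0 : ℝ) (2 * Real.pi),
      ∑ b, c b * (exp (θ b * I) * star (exp (θ j * I))) =
      (2 * Real.pi) ^ Fintype.card ι • c j := by
  have hint : ∀ b, IntegrableOn (fun θ : ι → ℝ => c b * (exp (θ b * I) * star (exp (θ j * I))))
      (Set.univ.pi fun _ : ι => Set.Icc (0 : ℝ) (2 * Real.pi)) := fun b =>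
    ContinuousOn.integrableOn_compact (isCompact_univ_pi fun _ => isCompact_Icc)
      (by fun_prop)
  rw [integral_finsetSum _ fun b _ => hint b]
  simp_rw [integral_const_mul, setIntegral_torus_exp_mul_star_exp]
  simp [Complex.real_smul, mul_comm]

theorem setIntegral_torus_biaverage_diagonal_apply (T : Matrix ι ι ℂ →ₗ[ℂ] Matrix ι ι ℂ)
    (X : Matrix ι ι ℂ) (i j : ι) :
    ∫ θ₁ in Set.univ.pi fun _ : ι => Set.Icc (0 : ℝ) (2 * Real.pi),
      ∫ θ₂ in Set.univ.pi fun _ : ι => Set.Icc (0 : ℝ) (2 * Real.pi),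
        ((diagonal fun c => exp (θ₁ c * I))ᴴ *
          T (diagonal (fun c => exp (θ₁ c * I)) * X * diagonal fun c => exp (θ₂ c * I)) *
          (diagonal fun c => exp (θ₂ c * I))ᴴ) i j =
      ((2 * Real.pi) ^ Fintype.card ι) ^ 2 • (T (single i j 1) i j * X i j) := by
  simp_rw [conjTranspose_diagonal_mul_map_mul_conjTranspose_diagonal_apply,
    setIntegral_torus_sum_mul_exp_mul_star_exp, Finset.smul_sum, ← smul_mul_assoc]
  rw [setIntegral_torus_sum_mul_exp_mul_star_exp]
  simp only [Complex.real_smul]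
  push_cast
  ring

end Torus

open MeasureTheory in
theorem stmt9_general (k : ℕ)
    (T : Matrix (Fin k) (Fin k) ℂ →ₗ[ℂ] Matrix (Fin k) (Fin k) ℂ)
    (hCP : CompletelyPositive (⇑T))
    (Dm : (Fin k → ℝ) → Matrix (Fin k) (Fin k) ℂ)
    (hDm : ∀ θ, Dm θ = Matrix.diagonal fun j => Complex.exp ((θ j : ℂ) * Complex.I))
    (γ : Matrix (Fin k) (Fin k) ℂ → Matrix (Fin k) (Fin k) ℂ)
    (hγ : ∀ X, γ X = Matrix.of fun i j =>
      (((2 * Real.pi) ^ k)⁻¹) ^ 2 •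
        ∫ θ₁ in Set.univ.pi fun _ : Fin k => Set.Icc (0 : ℝ) (2 * Real.pi),
          ∫ θ₂ in Set.univ.pi fun _ : Fin k => Set.Icc (0 : ℝ) (2 * Real.pi),
            ((Dm θ₁)ᴴ * T (Dm θ₁ * X * Dm θ₂) * (Dm θ₂)ᴴ) i j)
    (B : Matrix (Fin k) (Fin k) ℂ)
    (hB : B = Matrix.of fun i j => (T (Matrix.single i j 1)) i j) :
    (∀ X, γ X = schur B X) ∧ B.PosSemidef ∧ CompletelyPositive γ := by
  have hSchur : ∀ X, γ X = schur B X := by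
    intro X
    ext i j
    simp only [hγ, hDm, of_apply, setIntegral_torus_biaverage_diagonal_apply, Fintype.card_fin,
      smul_smul, ← mul_pow, inv_mul_cancel₀ (pow_ne_zero k Real.two_pi_pos.ne'), one_pow,
      one_smul, hB, schur]
  have hBpsd : B.PosSemidef := hB ▸ posSemidef_diag_choi_of_completelyPositive hCP
  exact ⟨hSchur, hBpsd, funext hSchur ▸ completelyPositive_schur hBpsd⟩

open MeasureTheory in
/-- The `D`-biaverage of a completely positive map `T`, integrating
over the group of diagonal unitaries (parametrised by `𝕋^k` with normalised
Lebesgue/Haar measure), is the Schur multiplier `S_B` with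
`b i j = (T (E i j)) i j`; `B` is positive semidefinite, so `γ` is completely
positive. -/
theorem stmt9 (k : ℕ) (hk : 0 < k)
    (T : Matrix (Fin k) (Fin k) ℂ →ₗ[ℂ] Matrix (Fin k) (Fin k) ℂ)
    (hCP : CompletelyPositive (⇑T))
    (Dm : (Fin k → ℝ) → Matrix (Fin k) (Fin k) ℂ)
    (hDm : ∀ θ, Dm θ = Matrix.diagonal fun j => Complex.exp ((θ j : ℂ) * Complex.I))
    (γ : Matrix (Fin k) (Fin k) ℂ → Matrix (Fin k) (Fin k) ℂ)
    (hγ : ∀ X, γ X = Matrix.of fun i j =>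
      (((2 * Real.pi) ^ k)⁻¹) ^ 2 •
        ∫ θ₁ in Set.univ.pi fun _ : Fin k => Set.Icc (0 : ℝ) (2 * Real.pi),
          ∫ θ₂ in Set.univ.pi fun _ : Fin k => Set.Icc (0 : ℝ) (2 * Real.pi),
            ((Dm θ₁)ᴴ * T (Dm θ₁ * X * Dm θ₂) * (Dm θ₂)ᴴ) i j)
    (B : Matrix (Fin k) (Fin k) ℂ)
    (hB : B = Matrix.of fun i j => (T (Matrix.single i j 1)) i j) :
    (∀ X, γ X = schur B X) ∧ B.PosSemidef ∧ CompletelyPositive γ :=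
  stmt9_general k T hCP Dm hDm γ hγ B hB

end
end Paper
end

section
/- Let $T\colon M_k\to M_k$ be completely positive and let $\gamma(X)=\frac{1}{4^k}\sum_{D_1,D_2} D_1^* T(D_1 X D_2) D_2^*$, where $D_1, D_2$ range over the $2^k$ diagonal matrices with entries $\pm 1$. Then $\gamma$ is the Schur multiplier $S_B$ where $b_{i,j}=T(E_{i,j})_{i,j}$, and $B$ is positive semidefinite. -/
/-!
The sign vectors `ε_s` are orthogonal characters of `(ℤ/2)^k`: `∑_s ε_s(p) ε_s(i) = 2^k δ_{pi}`.
Expanding `D₁ X D₂` in matrix units, the `(p, q)` entry of `∑ D₁* T(D₁ X D₂) D₂*` is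
`∑_{i,j} (∑_{s₁} ε(p)ε(i)) (∑_{s₂} ε(q)ε(j)) X_{ij} T(E_{ij})_{pq} = 4^k T(E_{pq})_{pq} X_{pq}`.
`B` is the compression of the Choi matrix `[T(E_{ab})]`, positive by complete positivity applied
to `ΩΩ*` with `Ω = ∑ eᵢ ⊗ eᵢ`, to the indices `(i, i)`.
-/

open scoped Matrix.Norms.L2Operator ComplexOrder

namespace Paper

noncomputable section
open Matrix

section SignTwirl

variable {ι : Type*}

def signVec (s : ι → Bool) (j : ι) : ℂ := if s j then 1 else -1

lemma signVec_mul_self (s : ι → Bool) (j : ι) : signVec s j * signVec s j = 1 := by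
  unfold signVec; split_ifs <;> norm_num

lemma star_signVec (s : ι → Bool) (j : ι) : star (signVec s j) = signVec s j := by
  cases h : s j <;> simp [signVec, h]

variable [Fintype ι] [DecidableEq ι]

lemma sum_signVec_mul_signVec (p i : ι) :
    ∑ s : ι → Bool, signVec s p * signVec s i = if p = i then 2 ^ Fintype.card ι else 0 := by
  split_ifs with h
  · subst h; simp [signVec_mul_self]
  · -- flipping the sign at `p` negates each term
    refine Finset.sum_ninvolution (fun s => Function.update s p (!s p)) (fun s => ?_)
      (fun s _ hs => ?_) (fun _ => Finset.mem_univ _) (fun s => ?_)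
    · simp only [signVec, Function.update_self, Function.update_of_ne (Ne.symm h)]
      cases s p <;> cases s i <;> simp
    · simpa using congrFun hs p
    · simp

lemma conjTranspose_diagonal_mul_mul_apply (d e : ι → ℂ) (M : Matrix ι ι ℂ) (p q : ι) :
    ((diagonal d)ᴴ * M * (diagonal e)ᴴ) p q = star (d p) * M p q * star (e q) := by
  simp [diagonal_conjTranspose, mul_diagonal, diagonal_mul]

lemma diagonal_mul_mul_diagonal_eq_sum_single (d e : ι → ℂ) (X : Matrix ι ι ℂ) :
    diagonal d * X * diagonal e = ∑ i, ∑ j, (d i * X i j * e j) • single i j 1 := by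
  conv_lhs => rw [matrix_eq_sum_single (diagonal d * X * diagonal e)]
  simp [mul_diagonal, diagonal_mul, smul_single]

lemma sign_twirl_apply (T : Matrix ι ι ℂ →ₗ[ℂ] Matrix ι ι ℂ) (s₁ s₂ : ι → Bool)
    (X : Matrix ι ι ℂ) (p q : ι) :
    ((diagonal (signVec s₁))ᴴ * T (diagonal (signVec s₁) * X * diagonal (signVec s₂)) *
        (diagonal (signVec s₂))ᴴ) p q =
      ∑ i, ∑ j, signVec s₁ p * signVec s₁ i * (signVec s₂ q * signVec s₂ j) *
        (X i j * T (single i j 1) p q) := by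
  rw [conjTranspose_diagonal_mul_mul_apply, star_signVec, star_signVec,
    diagonal_mul_mul_diagonal_eq_sum_single]
  simp only [map_sum, map_smul, Matrix.sum_apply, Matrix.smul_apply, smul_eq_mul, Finset.mul_sum,
    Finset.sum_mul]
  exact Fintype.sum_congr _ _ fun i => Fintype.sum_congr _ _ fun j => by ring

theorem sum_sign_twirl_apply (T : Matrix ι ι ℂ →ₗ[ℂ] Matrix ι ι ℂ) (X : Matrix ι ι ℂ)
    (p q : ι) :
    (∑ s₁ : ι → Bool, ∑ s₂ : ι → Bool,
        (diagonal (signVec s₁))ᴴ * T (diagonal (signVec s₁) * X * diagonal (signVec s₂)) *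
          (diagonal (signVec s₂))ᴴ) p q =
      4 ^ Fintype.card ι * (T (single p q 1) p q * X p q) := by
  simp only [Matrix.sum_apply, sign_twirl_apply]
  calc _ = ∑ i, ∑ j, (∑ s₁ : ι → Bool, signVec s₁ p * signVec s₁ i) *
          (∑ s₂ : ι → Bool, signVec s₂ q * signVec s₂ j) * (X i j * T (single i j 1) p q) := by
        simp only [Finset.sum_mul_sum]
        simp only [Finset.sum_mul]
        simp_rw [Finset.sum_comm (s := (Finset.univ : Finset (ι → Bool)))
          (t := (Finset.univ : Finset ι))]
    _ = _ := by
        simp only [sum_signVec_mul_signVec, mul_ite, ite_mul, zero_mul, mul_zero,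
          Finset.sum_ite_eq, Finset.mem_univ, if_true]
        rw [show (4 : ℂ) = 2 * 2 by norm_num, mul_pow]
        ring

end SignTwirl

lemma CompletelyPositive.posSemidef_choi {k : ℕ}
    {T : Matrix (Fin k) (Fin k) ℂ → Matrix (Fin k) (Fin k) ℂ} (hT : CompletelyPositive T) :
    (Matrix.of fun p q : Fin k × Fin k => T (single p.1 q.1 1) p.2 q.2).PosSemidef := by
  let Ω : Fin k × Fin k → ℂ := fun p => if p.1 = p.2 then 1 else 0
  have hΩ (a b : Fin k) : (of fun i j => vecMulVec Ω (star Ω) (a, i) (b, j)) = single a b 1 := by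
    ext i j
    simp only [Ω, of_apply, vecMulVec_apply, single_apply, Pi.star_apply]
    split_ifs <;> simp_all
  simpa only [hΩ] using hT k _ (posSemidef_vecMulVec_self_star Ω)

/-- Averaging a completely positive map `T` over the `2^k`
diagonal sign matrices on both sides yields the Schur multiplier `S_B` with
`b i j = (T (E i j)) i j`, and `B` is positive semidefinite. -/
theorem stmt10 (k : ℕ)
    (T : Matrix (Fin k) (Fin k) ℂ →ₗ[ℂ] Matrix (Fin k) (Fin k) ℂ)
    (hCP : CompletelyPositive (⇑T))
    (Dm : (Fin k → Bool) → Matrix (Fin k) (Fin k) ℂ)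
    (hDm : ∀ s, Dm s = Matrix.diagonal fun j => if s j then (1 : ℂ) else -1)
    (γ : Matrix (Fin k) (Fin k) ℂ → Matrix (Fin k) (Fin k) ℂ)
    (hγ : ∀ X, γ X = ((4 : ℂ) ^ k)⁻¹ •
      ∑ s₁ : Fin k → Bool, ∑ s₂ : Fin k → Bool,
        (Dm s₁)ᴴ * T (Dm s₁ * X * Dm s₂) * (Dm s₂)ᴴ)
    (B : Matrix (Fin k) (Fin k) ℂ)
    (hB : B = Matrix.of fun i j => (T (Matrix.single i j 1)) i j) :
    (∀ X, γ X = schur B X) ∧ B.PosSemidef := by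
  have hDm' : Dm = fun s => diagonal (signVec s) := funext hDm
  subst hDm' hB
  refine ⟨fun X => ?_, ?_⟩
  · ext p q
    rw [hγ, Matrix.smul_apply, sum_sign_twirl_apply, Fintype.card_fin, smul_eq_mul,
      inv_mul_cancel_left₀ (pow_ne_zero _ (by norm_num))]
    rfl
  · convert hCP.posSemidef_choi.submatrix fun i => (i, i)
    rfl

end
end Paper
end
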